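/- arXiv:1803.02942 — 5 statements merged into one kernel-verified Lean document; each statement's English description precedes it below -/
import Mathlib

section
/- Let λ be a composition of d into n nonnegative parts. For every 1 ≤ i ≤ n−1 and r, s ≥ 0, the identity E_i^{(r)} ∘ F_i^{(s)} = Σ_{t≥0} C(λ_i − λ_{i+1} + r − s, t) · F_i^{(s−t)} ∘ E_i^{(r−t)} holds as ℂ-linear maps M^λ → M^{λ+rα_i−sα_i}, where for an integer a and t ≥ 0 the generalized binomial coefficient is C(a, t) = a(a−1)⋯(a−t+1)/t!, and terms with a negative superscript are zero. -/
open Finsupp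

/-- The ambient free ℂ-vector space on all functions `Fin d → Fin n`. -/
abbrev Amb (d n : ℕ) : Type := (Fin d → Fin n) →₀ ℂ

/-- The `i`-th cell `T^i` of a function `T : Fin d → Fin n`. -/
def cell {d n : ℕ} (T : Fin d → Fin n) (i : Fin n) : Finset (Fin d) :=
  Finset.univ.filter fun x => T x = i

/-- `T` is a `λ`-tabloid: the `i`-th cell has `λ i` elements. -/
def IsTabloid {d n : ℕ} (lam : Fin n → ℕ) (T : Fin d → Fin n) : Prop :=
  ∀ i, (cell T i).card = lam i

/-- The permutation module `M^λ`: the span of the `λ`-tabloids inside the ambient module. -/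
noncomputable def Mmod (d n : ℕ) (lam : Fin n → ℕ) : Submodule ℂ (Amb d n) :=
  Submodule.span ℂ {v | ∃ T, IsTabloid lam T ∧ v = Finsupp.single T 1}

/-- `c_{i,R} T`: move every element of `R` into the `i`-th cell. -/
def cmod {d n : ℕ} (i : Fin n) (R : Finset (Fin d)) (T : Fin d → Fin n) : Fin d → Fin n :=
  fun x => if x ∈ R then i else T x

/-- The divided power `E_i^{(r)}`, defined on tabloids by
`E_i^{(r)} T = ∑_{R ⊆ T^{i+1}, |R| = r} c_{i,R} T`. -/
noncomputable def Emap (d n : ℕ) (i : ℕ) (h : i + 1 < n) (r : ℕ) : Amb d n →ₗ[ℂ] Amb d n :=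
  Finsupp.lift (Amb d n) ℂ (Fin d → Fin n) fun T =>
    ∑ R ∈ (cell T ⟨i + 1, h⟩).powersetCard r,
      Finsupp.single (cmod ⟨i, Nat.lt_of_succ_lt h⟩ R T) 1

/-- The divided power `F_i^{(r)}`, defined on tabloids by
`F_i^{(r)} T = ∑_{R ⊆ T^{i}, |R| = r} c_{i+1,R} T`. -/
noncomputable def Fmap (d n : ℕ) (i : ℕ) (h : i + 1 < n) (r : ℕ) : Amb d n →ₗ[ℂ] Amb d n :=
  Finsupp.lift (Amb d n) ℂ (Fin d → Fin n) fun T =>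
    ∑ R ∈ (cell T ⟨i, Nat.lt_of_succ_lt h⟩).powersetCard r,
      Finsupp.single (cmod ⟨i + 1, h⟩ R T) 1

/-- The generalized binomial coefficient `C(a, t) = a(a-1)⋯(a-t+1)/t!` for `a ∈ ℤ`,
as a complex scalar. -/
noncomputable def genBinom (a : ℤ) (t : ℕ) : ℂ :=
  (∏ k ∈ Finset.range t, ((a : ℂ) - (k : ℂ))) / (t.factorial : ℂ)

open Finset

/-!
Applied to a tabloid `T` with `A = T^i` and `B = T^{i+1}`, both sides are combinations of the
tabloids obtained from `T` by moving some `P ⊆ A` into cell `i + 1` and some `Q ⊆ B` into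
cell `i`. On the left, the pair `(S, R)` of the two moves produces `(P, Q) = (S \ R, R \ S)`,
and the pairs producing a given `(P, Q)` are classified by their overlap `K = S ∩ R`, a subset
of `A \ P` of size `s - |P|`; on the right the overlaps are subsets of `B \ Q` instead.
Comparing coefficients leaves the Chu–Vandermonde identity
`C(|A| - |P|, m) = ∑_t C(|A| - |P| - (|B| - |Q|), t) C(|B| - |Q|, m - t)`, in which
`|A| - |P| - (|B| - |Q|) = λ_i - λ_{i+1} + r - s`.
-/

theorem genBinom_eq_ringChoose (a : ℤ) (t : ℕ) : genBinom a t = Ring.choose (a : ℂ) t := by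
  rw [Ring.choose_eq_smul, ← Polynomial.aeval_eq_smeval, Polynomial.aeval_def,
    ← Polynomial.eval_map, descPochhammer_map, descPochhammer_eval_eq_prod_range, genBinom,
    smul_eq_mul, div_eq_inv_mul]

theorem natChoose_eq_sum_genBinom_mul_choose (x y m : ℕ) :
    (x.choose m : ℂ) =
      ∑ t ∈ range (m + 1), genBinom ((x : ℤ) - y) t * (y.choose (m - t) : ℂ) := by
  have hx : (x : ℂ) = (((x : ℤ) - y : ℤ) : ℂ) + y := by push_cast; ring
  rw [← Ring.choose_natCast, hx, Ring.add_choose_eq m (Commute.all _ _),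
    Nat.sum_antidiagonal_eq_sum_range_succ_mk]
  simp only [genBinom_eq_ringChoose, Ring.choose_natCast]

def overlapCount (a p q s r : ℕ) : ℕ :=
  if p ≤ s ∧ q + s = p + r then (a - p).choose (s - p) else 0

theorem overlapCount_eq_sum_genBinom_mul {a b p q : ℕ} (hp : p ≤ a) (hq : q ≤ b) (s r : ℕ) :
    (overlapCount a p q s r : ℂ) =
      ∑ t ∈ range (min r s + 1),
        genBinom ((a : ℤ) - b + r - s) t * overlapCount b q p (r - t) (s - t) := by
  unfold overlapCount
  by_cases hc : p ≤ s ∧ q + s = p + r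
  · have hab : ((a - p : ℕ) : ℤ) - (b - q : ℕ) = (a : ℤ) - b + r - s := by omega
    rw [if_pos hc, natChoose_eq_sum_genBinom_mul_choose _ (b - q), hab]
    -- only the terms with `t ≤ s - p` survive on the right
    refine (sum_congr rfl fun t ht => ?_).trans
      (sum_subset (range_subset_range.mpr (by omega)) fun t ht hts => ?_)
    · simp only [mem_range] at ht
      rw [if_pos (by omega), show r - t - q = s - p - t by omega]
    · simp only [mem_range] at ht hts
      rw [if_neg (by omega), Nat.cast_zero, mul_zero]
  · rw [if_neg hc, Nat.cast_zero, eq_comm]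
    refine sum_eq_zero fun t ht => ?_
    rw [mem_range] at ht
    rw [if_neg (by omega), Nat.cast_zero, mul_zero]

section Overlap

variable {α : Type*} [DecidableEq α] {A B P Q K : Finset α}

theorem union_sdiff_union_of_disjoint (hPQ : Disjoint P Q) (hPK : Disjoint P K) :
    (P ∪ K) \ (Q ∪ K) = P := by
  ext y
  have hQ : y ∈ P → y ∉ Q := fun h => disjoint_left.mp hPQ h
  have hK : y ∈ P → y ∉ K := fun h => disjoint_left.mp hPK h
  simp only [mem_sdiff, mem_union]
  tauto

theorem union_inter_union_of_disjoint (hPQ : Disjoint P Q) : (P ∪ K) ∩ (Q ∪ K) = K := by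
  rw [← inter_union_distrib_right, disjoint_iff_inter_eq_empty.mp hPQ, empty_union]

theorem card_sdiff_pairs_eq_overlapCount (hAB : Disjoint A B) (hP : P ⊆ A) (hQ : Q ⊆ B)
    (s r : ℕ) :
    #{x ∈ (A.powersetCard s).sigma (fun S => (B ∪ S).powersetCard r) |
        (x.1 \ x.2, x.2 \ x.1) = (P, Q)} = overlapCount #A #P #Q s r := by
  -- a pair `(S, R)` of the fibre is `(P ∪ K, Q ∪ K)` for its overlap `K = S ∩ R ⊆ A \ P`
  have hcard : ∀ S R, #S = s → #R = r → S \ R = P → R \ S = Q →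
      #P + #(S ∩ R) = s ∧ #Q + #(S ∩ R) = r := by
    rintro S R rfl rfl rfl rfl
    rw [card_sdiff_add_card_inter, inter_comm, card_sdiff_add_card_inter]
    exact ⟨rfl, rfl⟩
  unfold overlapCount
  split_ifs with hc
  · rw [← card_sdiff_of_subset hP, ← card_powersetCard]
    refine card_nbij' (fun x => x.1 ∩ x.2) (fun K => ⟨P ∪ K, Q ∪ K⟩) ?_ ?_ ?_ ?_
    · rintro ⟨S, R⟩ hx
      simp only [mem_coe, mem_filter, mem_sigma, mem_powersetCard, Prod.mk.injEq] at hx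
      obtain ⟨⟨⟨hSA, hS⟩, -, hR⟩, rfl, hRS⟩ := hx
      have := hcard S R hS hR rfl hRS
      simp only [mem_coe, mem_powersetCard]
      exact ⟨fun y hy => mem_sdiff.mpr ⟨hSA (mem_inter.mp hy).1,
        fun h => (mem_sdiff.mp h).2 (mem_inter.mp hy).2⟩, by omega⟩
    · intro K hK
      simp only [mem_coe, mem_powersetCard, subset_sdiff] at hK
      obtain ⟨⟨hKA, hKP⟩, hK⟩ := hK
      have hQK : Disjoint Q K := hAB.symm.mono hQ hKA
      have hPQ : Disjoint P Q := hAB.mono hP hQ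
      simp only [coe_filter, mem_sigma, mem_powersetCard, Prod.mk.injEq]
      refine ⟨⟨⟨union_subset hP hKA, ?_⟩, union_subset_union hQ subset_union_right, ?_⟩,
        union_sdiff_union_of_disjoint hPQ hKP.symm, union_sdiff_union_of_disjoint hPQ.symm hQK⟩
      · rw [card_union_of_disjoint hKP.symm]; omega
      · rw [card_union_of_disjoint hQK]; omega
    · rintro ⟨S, R⟩ hx
      simp only [coe_filter, mem_sigma, Prod.mk.injEq] at hx
      obtain ⟨-, rfl, rfl⟩ := hx
      dsimp only
      rw [sdiff_union_inter, inter_comm, sdiff_union_inter]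
    · intro K _
      exact union_inter_union_of_disjoint (hAB.mono hP hQ)
  · rw [card_eq_zero, filter_eq_empty_iff]
    rintro ⟨S, R⟩ hx hSR
    simp only [mem_sigma, mem_powersetCard, Prod.mk.injEq] at hx hSR
    have := hcard S R hx.1.2 hx.2.2 hSR.1 hSR.2
    omega

theorem sum_sdiff_pairs_eq_sum_overlapCount_smul {M : Type*} [AddCommMonoid M]
    (hAB : Disjoint A B) (s r : ℕ) (f : Finset α → Finset α → M) :
    ∑ S ∈ A.powersetCard s, ∑ R ∈ (B ∪ S).powersetCard r, f (S \ R) (R \ S) =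
      ∑ P ∈ A.powerset, ∑ Q ∈ B.powerset, overlapCount #A #P #Q s r • f P Q := by
  have hmaps : ∀ x ∈ (A.powersetCard s).sigma (fun S => (B ∪ S).powersetCard r),
      (x.1 \ x.2, x.2 \ x.1) ∈ A.powerset ×ˢ B.powerset := by
    rintro ⟨S, R⟩ hx
    simp only [mem_sigma, mem_powersetCard] at hx
    simp only [mem_product, mem_powerset]
    exact ⟨sdiff_subset.trans hx.1.1, sdiff_le_iff'.mpr hx.2.1⟩
  rw [sum_sigma', ← sum_fiberwise_of_maps_to' hmaps (fun PQ => f PQ.1 PQ.2), sum_product]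
  refine sum_congr rfl fun P hP => sum_congr rfl fun Q hQ => ?_
  rw [sum_const, card_sdiff_pairs_eq_overlapCount hAB (mem_powerset.mp hP) (mem_powerset.mp hQ)]

end Overlap

section Tabloid

variable {d n : ℕ}

theorem mem_cell {T : Fin d → Fin n} {x : Fin d} {j : Fin n} : x ∈ cell T j ↔ T x = j := by
  simp [cell]

theorem disjoint_cell (T : Fin d → Fin n) {j k : Fin n} (hjk : j ≠ k) :
    Disjoint (cell T j) (cell T k) :=
  Finset.disjoint_left.mpr fun _ hj hk => hjk ((mem_cell.mp hj).symm.trans (mem_cell.mp hk))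

theorem cell_cmod_self (j : Fin n) (R : Finset (Fin d)) (T : Fin d → Fin n) :
    cell (cmod j R T) j = cell T j ∪ R := by
  ext x
  by_cases hx : x ∈ R <;> simp [cell, cmod, hx]

theorem cmod_cmod_of_subset_cell {j k : Fin n} {R S : Finset (Fin d)} {T : Fin d → Fin n}
    (hS : S ⊆ cell T j) : cmod j R (cmod k S T) = cmod j (R \ S) (cmod k (S \ R) T) := by
  funext x
  by_cases hxR : x ∈ R <;> by_cases hxS : x ∈ S <;> simp [cmod, hxR, hxS]
  exact (mem_cell.mp (hS hxS)).symm

theorem cmod_comm {j k : Fin n} {R S : Finset (Fin d)} (hRS : Disjoint R S) (T : Fin d → Fin n) :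
    cmod j R (cmod k S T) = cmod k S (cmod j R T) := by
  funext x
  by_cases hxR : x ∈ R <;> by_cases hxS : x ∈ S <;> simp [cmod, hxR, hxS]
  exact (Finset.disjoint_left.mp hRS hxR hxS).elim

end Tabloid

section DividedPowers

variable (d n i : ℕ) (h : i + 1 < n)

theorem Emap_single (r : ℕ) (T : Fin d → Fin n) :
    Emap d n i h r (single T 1) =
      ∑ R ∈ (cell T ⟨i + 1, h⟩).powersetCard r, single (cmod ⟨i, by omega⟩ R T) 1 := by
  rw [Emap, lift_apply, sum_single_index (by simp), one_smul]

theorem Fmap_single (r : ℕ) (T : Fin d → Fin n) :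
    Fmap d n i h r (single T 1) =
      ∑ R ∈ (cell T ⟨i, by omega⟩).powersetCard r, single (cmod ⟨i + 1, h⟩ R T) 1 := by
  rw [Fmap, lift_apply, sum_single_index (by simp), one_smul]

theorem Emap_Fmap_single (r s : ℕ) (T : Fin d → Fin n) :
    Emap d n i h r (Fmap d n i h s (single T 1)) =
      ∑ P ∈ (cell T ⟨i, by omega⟩).powerset, ∑ Q ∈ (cell T ⟨i + 1, h⟩).powerset,
        overlapCount #(cell T ⟨i, by omega⟩) #P #Q s r •
          single (cmod ⟨i, by omega⟩ Q (cmod ⟨i + 1, h⟩ P T)) 1 := by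
  rw [Fmap_single, map_sum, ← sum_sdiff_pairs_eq_sum_overlapCount_smul (disjoint_cell T (by simp))
    s r fun P Q => single (cmod ⟨i, by omega⟩ Q (cmod ⟨i + 1, h⟩ P T)) 1]
  refine sum_congr rfl fun S hS => ?_
  rw [Emap_single, cell_cmod_self]
  refine sum_congr rfl fun R _ => ?_
  rw [cmod_cmod_of_subset_cell (mem_powersetCard.mp hS).1]

theorem Fmap_Emap_single (r s : ℕ) (T : Fin d → Fin n) :
    Fmap d n i h s (Emap d n i h r (single T 1)) =
      ∑ P ∈ (cell T ⟨i, by omega⟩).powerset, ∑ Q ∈ (cell T ⟨i + 1, h⟩).powerset,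
        overlapCount #(cell T ⟨i + 1, h⟩) #Q #P r s •
          single (cmod ⟨i, by omega⟩ Q (cmod ⟨i + 1, h⟩ P T)) 1 := by
  rw [Finset.sum_comm, Emap_single, map_sum,
    ← sum_sdiff_pairs_eq_sum_overlapCount_smul (disjoint_cell T (by simp))
      r s fun Q P => single (cmod ⟨i, by omega⟩ Q (cmod ⟨i + 1, h⟩ P T)) 1]
  refine sum_congr rfl fun R hR => ?_
  rw [Fmap_single, cell_cmod_self]
  refine sum_congr rfl fun S _ => ?_
  rw [cmod_cmod_of_subset_cell (mem_powersetCard.mp hR).1, cmod_comm disjoint_sdiff_sdiff]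

theorem Emap_Fmap_single_eq_sum (r s : ℕ) (T : Fin d → Fin n) :
    Emap d n i h r (Fmap d n i h s (single T 1)) =
      ∑ t ∈ range (min r s + 1),
        genBinom ((#(cell T ⟨i, by omega⟩) : ℤ) - #(cell T ⟨i + 1, h⟩) + r - s) t •
          Fmap d n i h (s - t) (Emap d n i h (r - t) (single T 1)) := by
  simp_rw [Emap_Fmap_single, Fmap_Emap_single, Finset.smul_sum]
  rw [Finset.sum_comm (s := range _)]
  refine sum_congr rfl fun P hP => ?_
  rw [Finset.sum_comm (s := range _)]
  refine sum_congr rfl fun Q hQ => ?_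
  simp_rw [← Nat.cast_smul_eq_nsmul ℂ, smul_smul, ← sum_smul]
  rw [overlapCount_eq_sum_genBinom_mul (card_le_card (mem_powerset.mp hP))
    (card_le_card (mem_powerset.mp hQ))]

end DividedPowers

theorem stmt8_general (d n : ℕ) (lam : Fin n → ℕ)
    (i : ℕ) (h : i + 1 < n) (r s : ℕ) :
    ∀ v ∈ Mmod d n lam,
      Emap d n i h r (Fmap d n i h s v) =
        ∑ t ∈ Finset.range (min r s + 1),
          genBinom ((lam ⟨i, Nat.lt_of_succ_lt h⟩ : ℤ) - (lam ⟨i + 1, h⟩ : ℤ) + r - s) t •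
            Fmap d n i h (s - t) (Emap d n i h (r - t) v) := by
  intro v hv
  refine LinearMap.eqOn_span' (f := Emap d n i h r ∘ₗ Fmap d n i h s)
    (g := ∑ t ∈ range (min r s + 1),
      genBinom ((lam ⟨i, Nat.lt_of_succ_lt h⟩ : ℤ) - (lam ⟨i + 1, h⟩ : ℤ) + r - s) t •
        (Fmap d n i h (s - t) ∘ₗ Emap d n i h (r - t))) ?_ hv |>.trans ?_
  · rintro _ ⟨T, hT, rfl⟩
    simp only [LinearMap.comp_apply, LinearMap.sum_apply, LinearMap.smul_apply]
    rw [← hT, ← hT]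
    exact Emap_Fmap_single_eq_sum d n i h r s T
  · simp only [LinearMap.sum_apply, LinearMap.smul_apply, LinearMap.comp_apply]

/-- the commutation relation
`E_i^{(r)} ∘ F_i^{(s)} = Σ_{t≥0} C(λ_i − λ_{i+1} + r − s, t) · F_i^{(s−t)} ∘ E_i^{(r−t)}`
as linear maps `M^λ → M^{λ+rα_i−sα_i}` (terms with a negative superscript, i.e. `t > min r s`,
are zero, so the sum is truncated at `min r s`). -/
theorem stmt8 (d n : ℕ) (lam : Fin n → ℕ) (hlam : ∑ i, lam i = d)
    (i : ℕ) (h : i + 1 < n) (r s : ℕ) :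
    ∀ v ∈ Mmod d n lam,
      Emap d n i h r (Fmap d n i h s v) =
        ∑ t ∈ Finset.range (min r s + 1),
          genBinom ((lam ⟨i, Nat.lt_of_succ_lt h⟩ : ℤ) - (lam ⟨i + 1, h⟩ : ℤ) + r - s) t •
            Fmap d n i h (s - t) (Emap d n i h (r - t) v) :=
  stmt8_general d n lam i h r s
end

section
/- Let λ be a composition of d into n nonnegative parts, and let i, j ∈ {1,…,n−1} with |i−j| = 1. Writing E_i := E_i^{(1)}, the identity E_i ∘ E_j ∘ E_i = E_i^{(2)} ∘ E_j + E_j ∘ E_i^{(2)} holds as ℂ-linear maps M^λ → M^{λ+2α_i+α_j}, and likewise with F in place of E throughout. -/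
open Finsupp

/-!
Write `E = ∑ₓ eₓ` and `E' = ∑ₓ e'ₓ`, where `eₓ` moves the single letter `x` from one cell to
another. Moves of different letters commute, `eₓ² = 0`, and `eₓ e'ₓ eₓ = 0` because no letter
can be moved three times in the required pattern. Hence the double commutator
`[E, [E, E']] = ∑ₓ [eₓ, [eₓ, e'ₓ]]` vanishes, i.e. `E²E' + E'E² = 2 EE'E`, and `E² = 2 E^{(2)}`.
-/

section PairSums
variable {α M : Type*} [DecidableEq α] [AddCommMonoid M]

theorem Finset.sum_sum_erase_pair_eq_two_nsmul (X : Finset α) (f : Finset α → M) :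
    ∑ x ∈ X, ∑ y ∈ X.erase x, f {x, y} = 2 • ∑ R ∈ X.powersetCard 2, f R := by
  rw [← Finset.sum_finset_product' X.offDiag X X.erase (f := fun x y => f {x, y})
    (fun a => by simp [Finset.mem_offDiag, ne_comm, and_comm])]
  have hmaps : ∀ a ∈ X.offDiag, ({a.1, a.2} : Finset α) ∈ X.powersetCard 2 := by
    intro a ha
    obtain ⟨h1, h2, hne⟩ := Finset.mem_offDiag.mp ha
    simp [Finset.mem_powersetCard, Finset.insert_subset_iff, Finset.card_pair hne, h1, h2]
  rw [← Finset.sum_fiberwise_of_maps_to' hmaps, Finset.smul_sum]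
  refine Finset.sum_congr rfl fun R hR => ?_
  obtain ⟨hRX, hR2⟩ := Finset.mem_powersetCard.mp hR
  have hfiber : {a ∈ X.offDiag | ({a.1, a.2} : Finset α) = R} = R.offDiag := by
    ext ⟨a, c⟩
    simp only [Finset.mem_filter, Finset.mem_offDiag]
    constructor
    · rintro ⟨⟨-, -, hne⟩, rfl⟩
      simp [hne]
    · rintro ⟨ha, hc, hne⟩
      refine ⟨⟨hRX ha, hRX hc, hne⟩, Finset.eq_of_subset_of_card_le ?_ ?_⟩
      · simp [Finset.insert_subset_iff, ha, hc]
      · rw [hR2, Finset.card_pair hne]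
  rw [Finset.sum_const, hfiber, Finset.offDiag_card, hR2]

end PairSums

section Serre
variable {A ι : Type*} [Ring A]

theorem sum_mul_sum_sub_sum_mul_sum_of_commute (s : Finset ι) (f g : ι → A)
    (h : ∀ x ∈ s, ∀ y ∈ s, x ≠ y → Commute (f x) (g y)) :
    (∑ x ∈ s, f x) * (∑ x ∈ s, g x) - (∑ x ∈ s, g x) * (∑ x ∈ s, f x)
      = ∑ x ∈ s, (f x * g x - g x * f x) := by
  rw [Finset.sum_mul_sum, Finset.sum_mul_sum, Finset.sum_comm (s := s) (t := s)
    (f := fun x y => g x * f y), ← Finset.sum_sub_distrib]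
  refine Finset.sum_congr rfl fun x hx => ?_
  rw [← Finset.sum_sub_distrib]
  refine Finset.sum_eq_single x (fun y hy hyx => ?_) (absurd hx)
  rw [(h x hx y hy hyx.symm).eq, sub_self]

theorem serre_relation_of_sum (s : Finset ι) (f g : ι → A)
    (hff : ∀ x ∈ s, ∀ y ∈ s, x ≠ y → Commute (f x) (f y))
    (hfg : ∀ x ∈ s, ∀ y ∈ s, x ≠ y → Commute (f x) (g y))
    (hsq : ∀ x ∈ s, f x * f x = 0) (hfgf : ∀ x ∈ s, f x * g x * f x = 0) :
    (∑ x ∈ s, f x) * (∑ x ∈ s, f x) * (∑ x ∈ s, g x)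
        + (∑ x ∈ s, g x) * (∑ x ∈ s, f x) * (∑ x ∈ s, f x)
      = 2 * ((∑ x ∈ s, f x) * (∑ x ∈ s, g x) * (∑ x ∈ s, f x)) := by
  set c : ι → A := fun x => f x * g x - g x * f x
  have hc : ∀ x ∈ s, ∀ y ∈ s, x ≠ y → Commute (f x) (c y) := fun x hx y hy hxy =>
    ((hff x hx y hy hxy).mul_right (hfg x hx y hy hxy)).sub_right
      ((hfg x hx y hy hxy).mul_right (hff x hx y hy hxy))
  have hlocal : ∀ x ∈ s, f x * c x - c x * f x = 0 := by
    intro x hx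
    calc f x * c x - c x * f x
        = f x * f x * g x - 2 * (f x * g x * f x) + g x * (f x * f x) := by
          simp only [c]; noncomm_ring
      _ = 0 := by rw [hsq x hx, hfgf x hx]; simp
  have hbracket := sum_mul_sum_sub_sum_mul_sum_of_commute s f c hc
  rw [← sum_mul_sum_sub_sum_mul_sum_of_commute s f g hfg, Finset.sum_eq_zero hlocal] at hbracket
  rw [← sub_eq_zero, ← hbracket]
  noncomm_ring

end Serre

section CellTransfer
variable {d n : ℕ}

/-- `Emap d n i h r` is `cellTransfer ⟨i + 1, _⟩ ⟨i, _⟩ r` and `Fmap d n i h r` is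
`cellTransfer ⟨i, _⟩ ⟨i + 1, _⟩ r`, definitionally. -/
noncomputable def cellTransfer (p q : Fin n) (r : ℕ) : Module.End ℂ (Amb d n) :=
  Finsupp.lift (Amb d n) ℂ (Fin d → Fin n) fun T =>
    ∑ R ∈ (cell T p).powersetCard r, Finsupp.single (cmod q R T) 1

noncomputable def siteMove (x : Fin d) (p q : Fin n) : Module.End ℂ (Amb d n) :=
  Finsupp.lift (Amb d n) ℂ (Fin d → Fin n) fun T =>
    if T x = p then Finsupp.single (Function.update T x q) 1 else 0

@[simp]
theorem cellTransfer_single (p q : Fin n) (r : ℕ) (T : Fin d → Fin n) :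
    cellTransfer p q r (Finsupp.single T 1) =
      ∑ R ∈ (cell T p).powersetCard r, Finsupp.single (cmod q R T) 1 := by
  simp [cellTransfer]

@[simp]
theorem siteMove_single (x : Fin d) (p q : Fin n) (T : Fin d → Fin n) :
    siteMove x p q (Finsupp.single T 1) =
      if T x = p then Finsupp.single (Function.update T x q) 1 else 0 := by
  simp [siteMove]

theorem cmod_singleton (q : Fin n) (x : Fin d) (T : Fin d → Fin n) :
    cmod q {x} T = Function.update T x q := by
  ext y
  by_cases hy : y = x <;> simp [cmod, hy]

theorem siteMove_commute {x y : Fin d} (hxy : x ≠ y) (p q p' q' : Fin n) :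
    Commute (siteMove x p q) (siteMove y p' q') := by
  ext T : 2
  by_cases hx : T x = p <;> by_cases hy : T y = p' <;>
    simp [Module.End.mul_apply, hx, hy, hxy, hxy.symm, Function.update_comm hxy]

theorem siteMove_mul_siteMove_of_ne (x : Fin d) {p q p' q' : Fin n} (h : q ≠ p') :
    siteMove x p' q' * siteMove x p q = 0 := by
  ext T : 2
  by_cases hx : T x = p <;> simp [Module.End.mul_apply, hx, h]

theorem cellTransfer_one_eq_sum_siteMove (p q : Fin n) :
    cellTransfer p q 1 = ∑ x, siteMove (d := d) x p q := by
  ext T : 2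
  simp [Finset.powersetCard_one, cmod_singleton, cell, Finset.sum_ite]

theorem cellTransfer_one_mul_self {p q : Fin n} (hpq : p ≠ q) :
    cellTransfer p q 1 * cellTransfer p q 1 = 2 • cellTransfer (d := d) p q 2 := by
  ext T : 2
  have hcell : ∀ x ∈ cell T p, cell (cmod q {x} T) p = (cell T p).erase x := by
    intro x _
    ext y
    by_cases hy : y = x <;> simp [cell, cmod, hy, hpq.symm]
  have hpair : ∀ x y : Fin d, cmod q {y} (cmod q {x} T) = cmod q {x, y} T := by
    intro x y
    ext z
    by_cases hz : z = y <;> simp [cmod, hz]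
  calc (cellTransfer p q 1 * cellTransfer p q 1 : Module.End ℂ (Amb d n)) (Finsupp.single T 1)
      = ∑ x ∈ cell T p, ∑ y ∈ (cell T p).erase x, Finsupp.single (cmod q {x, y} T) 1 := by
        simp only [Module.End.mul_apply, cellTransfer_single, Finset.powersetCard_one,
          Finset.sum_map, map_sum]
        refine Finset.sum_congr rfl fun x hx => ?_
        simp [hcell x hx, hpair]
    _ = (2 • cellTransfer p q 2) (Finsupp.single T 1) := by
        rw [Finset.sum_sum_erase_pair_eq_two_nsmul (f := fun R => Finsupp.single (cmod q R T) 1),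
          LinearMap.smul_apply, cellTransfer_single]

/-- `h` says that no letter can be moved `p → q`, then `p' → q'`, then `p → q` again. -/
theorem cellTransfer_serre {p q p' q' : Fin n} (hpq : p ≠ q) (h : q ≠ p' ∨ q' ≠ p) :
    cellTransfer p q 1 * cellTransfer p' q' 1 * cellTransfer (d := d) p q 1 =
      cellTransfer p q 2 * cellTransfer p' q' 1 + cellTransfer p' q' 1 * cellTransfer p q 2 := by
  have hserre := serre_relation_of_sum Finset.univ
    (fun x => siteMove (d := d) x p q) (fun x => siteMove x p' q')
    (fun x _ y _ hxy => siteMove_commute hxy _ _ _ _)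
    (fun x _ y _ hxy => siteMove_commute hxy _ _ _ _)
    (fun x _ => siteMove_mul_siteMove_of_ne x hpq.symm)
    (fun x _ => by
      rcases h with h | h
      · rw [mul_assoc, siteMove_mul_siteMove_of_ne x h, mul_zero]
      · rw [siteMove_mul_siteMove_of_ne x h, zero_mul])
  simp only [← cellTransfer_one_eq_sum_siteMove] at hserre
  rw [mul_assoc (cellTransfer p' q' 1), cellTransfer_one_mul_self hpq, smul_mul_assoc,
    mul_smul_comm, ← smul_add] at hserre
  apply smul_right_injective _ (two_ne_zero : (2 : ℂ) ≠ 0)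
  simpa only [ofNat_smul_eq_nsmul, two_mul, two_nsmul] using hserre.symm

end CellTransfer

theorem stmt10_general (d n : ℕ) (lam : Fin n → ℕ)
    (i j : ℕ) (hi : i + 1 < n) (hj : j + 1 < n) (hadj : i + 1 = j ∨ j + 1 = i) :
    ∀ v ∈ Mmod d n lam,
      Emap d n i hi 1 (Emap d n j hj 1 (Emap d n i hi 1 v)) =
          Emap d n i hi 2 (Emap d n j hj 1 v) + Emap d n j hj 1 (Emap d n i hi 2 v) ∧
      Fmap d n i hi 1 (Fmap d n j hj 1 (Fmap d n i hi 1 v)) =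
          Fmap d n i hi 2 (Fmap d n j hj 1 v) + Fmap d n j hj 1 (Fmap d n i hi 2 v) := by
  intro v _
  have serre_apply {p q p' q' : Fin n} (hpq : p ≠ q) (h : q ≠ p' ∨ q' ≠ p) :
      cellTransfer p q 1 (cellTransfer p' q' 1 (cellTransfer p q 1 v)) =
        cellTransfer p q 2 (cellTransfer p' q' 1 v) + cellTransfer p' q' 1 (cellTransfer p q 2 v) :=
    LinearMap.congr_fun (cellTransfer_serre hpq h) v
  rcases hadj with rfl | rfl <;>
    refine ⟨serre_apply ?_ ?_, serre_apply ?_ ?_⟩ <;> simp only [ne_eq, Fin.ext_iff] <;> omega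

/-- the Serre-type relation for adjacent indices `|i−j| = 1`:
`E_i ∘ E_j ∘ E_i = E_i^{(2)} ∘ E_j + E_j ∘ E_i^{(2)}` as linear maps
`M^λ → M^{λ+2α_i+α_j}`, and likewise with `F` in place of `E`. -/
theorem stmt10 (d n : ℕ) (lam : Fin n → ℕ) (hlam : ∑ i, lam i = d)
    (i j : ℕ) (hi : i + 1 < n) (hj : j + 1 < n) (hadj : i + 1 = j ∨ j + 1 = i) :
    ∀ v ∈ Mmod d n lam,
      Emap d n i hi 1 (Emap d n j hj 1 (Emap d n i hi 1 v)) =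
          Emap d n i hi 2 (Emap d n j hj 1 v) + Emap d n j hj 1 (Emap d n i hi 2 v) ∧
      Fmap d n i hi 1 (Fmap d n j hj 1 (Fmap d n i hi 1 v)) =
          Fmap d n i hi 2 (Fmap d n j hj 1 v) + Fmap d n j hj 1 (Fmap d n i hi 2 v) :=
  stmt10_general d n lam i j hi hj hadj
end

section
/- Fix k, l ≥ 0 and set d = k+l, n = 2. Let B_{k,l} : M^{(k,l)} → M^{(l,k)} be the ℂ-linear map sending a (k,l)-tabloid T to the (l,k)-tabloid whose first cell is T^2 and whose second cell is T^1. Then B_{k,l} = Σ_{a,b ≥ 0, a−b = k−l} (−1)^{k−a} E_1^{(b)} ∘ F_1^{(a)} and also B_{k,l} = Σ_{a,b ≥ 0, a−b = l−k} (−1)^{l−a} F_1^{(b)} ∘ E_1^{(a)}, as ℂ-linear maps M^{(k,l)} → M^{(l,k)} (the sums are finite since terms whose superscript exceeds the relevant cell size are zero). Moreover B_{k,l} is a homomorphism of right ℂ[S_d]-modules. -/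
open Finsupp

/-- The right action of `g ∈ S_d`, `T ↦ T ∘ g`, extended linearly. -/
noncomputable def ract (d n : ℕ) (g : Equiv.Perm (Fin d)) : Amb d n →ₗ[ℂ] Amb d n :=
  Finsupp.lmapDomain ℂ ℂ fun T : Fin d → Fin n => T ∘ ⇑g

/-- The braiding `B_{k,l} : M^{(k,l)} → M^{(l,k)}`, sending a `(k,l)`-tabloid `T` to the
`(l,k)`-tabloid whose first cell is `T^2` and whose second cell is `T^1`. -/
noncomputable def Bmap (k l : ℕ) : Amb (k + l) 2 →ₗ[ℂ] Amb (k + l) 2 :=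
  Finsupp.lmapDomain ℂ ℂ fun T : Fin (k + l) → Fin 2 => (![1, 0] : Fin 2 → Fin 2) ∘ T

/-!
Write `A` and `B` for the two cells of `T`, with `|A| = p` and `|B| = q`. The term
`E^{(b)} F^{(a)} T` first moves some `S ⊆ A` with `|S| = a` into the second row and then removes
`b` elements from `B ∪ S`; when `a + q = b + p` what remains of the second row is an arbitrary
`C ⊆ B ∪ S` with `|C| = p`. Since a two-row tabloid is determined by its second cell, the whole
alternating sum is `∑_C (∑_{C ∩ A ⊆ S ⊆ A} (-1)^{|A| - |S|}) C`, and the inner sum vanishes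
unless `A ⊆ C`, that is `C = A`: only the swapped tabloid survives. Running the same argument with
the rows exchanged gives the `F E` formula.
-/

open Finset

namespace Finset

variable {α : Type*} [DecidableEq α]

theorem sum_powerset_filter_superset_neg_one_pow {R : Type*} [Ring R] {Y A : Finset α}
    (hYA : Y ⊆ A) :
    ∑ S ∈ A.powerset with Y ⊆ S, (-1 : R) ^ (#A - #S) = if Y = A then 1 else 0 := by
  have hcompl : ∑ S ∈ A.powerset with Y ⊆ S, (-1 : R) ^ (#A - #S) =
      ∑ Z ∈ (A \ Y).powerset, (-1 : R) ^ #Z := by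
    refine sum_nbij' (A \ ·) (A \ ·) ?_ ?_ ?_ ?_ ?_
    · intro S hS
      simp only [mem_filter, mem_powerset] at hS ⊢
      exact sdiff_subset_sdiff subset_rfl hS.2
    · intro Z hZ
      simp only [mem_filter, mem_powerset] at hZ ⊢
      exact ⟨sdiff_subset, fun x hx => mem_sdiff.2 ⟨hYA hx, fun h => (mem_sdiff.1 (hZ h)).2 hx⟩⟩
    · intro S hS
      exact Finset.sdiff_sdiff_eq_self (mem_powerset.1 (mem_filter.1 hS).1)
    · intro Z hZ
      exact Finset.sdiff_sdiff_eq_self ((mem_powerset.1 hZ).trans sdiff_subset)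
    · intro S hS
      rw [card_sdiff_of_subset (mem_powerset.1 (mem_filter.1 hS).1)]
  have hsign := congrArg (Int.cast : ℤ → R) (sum_powerset_neg_one_pow_card (x := A \ Y))
  push_cast at hsign
  rw [hcompl, hsign]
  exact if_congr ⟨fun h => subset_antisymm hYA (sdiff_eq_empty_iff_subset.1 h),
    fun h => sdiff_eq_empty_iff_subset.2 h.ge⟩ rfl rfl

theorem sum_powersetCard_sdiff {M : Type*} [AddCommMonoid M] {X : Finset α} {b c : ℕ}
    (h : b + c = #X) (f : Finset α → M) :
    ∑ T ∈ X.powersetCard b, f (X \ T) = ∑ C ∈ X.powersetCard c, f C := by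
  refine sum_nbij' (X \ ·) (X \ ·) ?_ ?_ ?_ ?_ fun _ _ => rfl
  · intro T hT
    rw [mem_powersetCard] at hT ⊢
    exact ⟨sdiff_subset, by rw [card_sdiff_of_subset hT.1]; omega⟩
  · intro C hC
    rw [mem_powersetCard] at hC ⊢
    exact ⟨sdiff_subset, by rw [card_sdiff_of_subset hC.1]; omega⟩
  · intro T hT
    exact Finset.sdiff_sdiff_eq_self (mem_powersetCard.1 hT).1
  · intro C hC
    exact Finset.sdiff_sdiff_eq_self (mem_powersetCard.1 hC).1

theorem sum_range_ite_sum_powersetCard_sdiff {M : Type*} [AddCommMonoid M] {X : Finset α}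
    {a p q : ℕ} (hX : #X = q + a) (hap : a ≤ p) (f : Finset α → M) :
    ∑ b ∈ range (q + 1), (if a + q = b + p then ∑ T ∈ X.powersetCard b, f (X \ T) else 0) =
      ∑ C ∈ X.powersetCard p, f C := by
  by_cases hpX : p ≤ a + q
  · rw [sum_eq_single (a + q - p), if_pos (by omega), sum_powersetCard_sdiff (c := p) (by omega)]
    · exact fun b _ hb => if_neg (by omega)
    · exact fun h => absurd (mem_range.2 (by omega)) h
  · rw [powersetCard_eq_empty.2 (by omega), sum_empty]
    exact sum_eq_zero fun b _ => if_neg (by omega)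

theorem sum_neg_one_pow_smul_sum_powersetCard_sdiff [Fintype α] {R M : Type*} [Ring R]
    [AddCommGroup M] [Module R M] (B : Finset α) {p q : ℕ} (hp : #Bᶜ = p) (hq : #B = q)
    (f : Finset α → M) :
    ∑ a ∈ range (p + 1), ∑ b ∈ range (q + 1),
      (if a + q = b + p then
        (-1 : R) ^ (p - a) • ∑ S ∈ Bᶜ.powersetCard a, ∑ T ∈ (B ∪ S).powersetCard b,
          f ((B ∪ S) \ T)
      else 0) = f Bᶜ := by
  calc _ = ∑ a ∈ range (#Bᶜ + 1), ∑ S ∈ Bᶜ.powersetCard a,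
          (-1 : R) ^ (p - #S) • ∑ C ∈ (B ∪ S).powersetCard p, f C := by
        rw [hp]
        refine sum_congr rfl fun a ha => Eq.symm ?_
        have hcard : ∀ S ∈ Bᶜ.powersetCard a, #(B ∪ S) = q + a := fun S hS => by
          obtain ⟨hSB, rfl⟩ := mem_powersetCard.1 hS
          rw [card_union_of_disjoint (disjoint_left.2 fun x hxB hxS => mem_compl.1 (hSB hxS) hxB),
            hq]
        rw [sum_congr rfl fun S hS => by rw [(mem_powersetCard.1 hS).2,
          ← sum_range_ite_sum_powersetCard_sdiff (hcard S hS) (Nat.lt_succ_iff.1 (mem_range.1 ha))],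
          ← smul_sum, sum_comm]
        simp only [sum_ite_irrel, sum_const_zero, smul_sum, smul_ite_zero]
    _ = ∑ S ∈ Bᶜ.powerset, (-1 : R) ^ (p - #S) • ∑ C ∈ (B ∪ S).powersetCard p, f C :=
        (sum_powerset _ _).symm
    _ = ∑ C ∈ (univ : Finset α).powersetCard p,
          (∑ S ∈ Bᶜ.powerset with C \ B ⊆ S, (-1 : R) ^ (#Bᶜ - #S)) • f C := by
        simp_rw [smul_sum, sum_smul, hp]
        refine sum_comm' fun S C => ?_
        have hcover : C \ B ⊆ S ↔ C ⊆ B ∪ S := sdiff_le_iff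
        simp only [mem_powerset, mem_powersetCard, mem_filter, subset_univ, true_and, hcover]
        tauto
    _ = ∑ C ∈ (univ : Finset α).powersetCard p, (if C \ B = Bᶜ then 1 else 0 : R) • f C :=
        sum_congr rfl fun C _ => by
          rw [sum_powerset_filter_superset_neg_one_pow fun x hx => mem_compl.2 (mem_sdiff.1 hx).2]
    _ = f Bᶜ := by
        rw [sum_eq_single Bᶜ]
        · simp [disjoint_compl_left]
        · intro C hC hCB
          rw [if_neg, zero_smul]
          intro h
          refine hCB (eq_of_subset_of_card_le (h ▸ sdiff_subset) ?_).symm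
          rw [(mem_powersetCard.1 hC).2, hp]
        · intro h
          exact absurd (mem_powersetCard.2 ⟨subset_univ _, hp⟩) h

end Finset

section MoveMaps

variable {d n : ℕ}

noncomputable def moveMap (i j : Fin n) (r : ℕ) : Amb d n →ₗ[ℂ] Amb d n :=
  Finsupp.lift (Amb d n) ℂ (Fin d → Fin n) fun T =>
    ∑ R ∈ (cell T i).powersetCard r, Finsupp.single (cmod j R T) 1

theorem Fmap_eq_moveMap (i : ℕ) (h : i + 1 < n) (r : ℕ) :
    Fmap d n i h r = moveMap ⟨i, Nat.lt_of_succ_lt h⟩ ⟨i + 1, h⟩ r := rfl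

theorem Emap_eq_moveMap (i : ℕ) (h : i + 1 < n) (r : ℕ) :
    Emap d n i h r = moveMap ⟨i + 1, h⟩ ⟨i, Nat.lt_of_succ_lt h⟩ r := rfl

theorem moveMap_single (i j : Fin n) (r : ℕ) (T : Fin d → Fin n) :
    moveMap i j r (Finsupp.single T 1) =
      ∑ R ∈ (cell T i).powersetCard r, Finsupp.single (cmod j R T) 1 := by
  rw [moveMap, Finsupp.lift_apply, Finsupp.sum_single_index] <;> simp

def twoCells (i j : Fin n) (D : Finset (Fin d)) : Fin d → Fin n :=
  fun x => if x ∈ D then j else i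

variable {i j : Fin n}

theorem cmod_twoCells_right (S D : Finset (Fin d)) :
    cmod j S (twoCells i j D) = twoCells i j (D ∪ S) := by
  funext x
  by_cases hS : x ∈ S <;> by_cases hD : x ∈ D <;> simp [cmod, twoCells, hS, hD]

theorem cmod_twoCells_left (R D : Finset (Fin d)) :
    cmod i R (twoCells i j D) = twoCells i j (D \ R) := by
  funext x
  by_cases hR : x ∈ R <;> by_cases hD : x ∈ D <;> simp [cmod, twoCells, hR, hD]

theorem cell_twoCells_right (hij : i ≠ j) (D : Finset (Fin d)) :
    cell (twoCells i j D) j = D := by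
  ext x
  by_cases hD : x ∈ D <;> simp [cell, twoCells, hD, hij]

theorem cell_twoCells_left (hij : i ≠ j) (D : Finset (Fin d)) :
    cell (twoCells i j D) i = Dᶜ := by
  ext x
  by_cases hD : x ∈ D <;> simp [cell, twoCells, hD, hij.symm]

theorem moveMap_single_twoCells_left (hij : i ≠ j) (a : ℕ) (D : Finset (Fin d)) :
    moveMap i j a (Finsupp.single (twoCells i j D) 1) =
      ∑ S ∈ Dᶜ.powersetCard a, Finsupp.single (twoCells i j (D ∪ S)) 1 := by
  simp only [moveMap_single, cell_twoCells_left hij, cmod_twoCells_right]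

theorem moveMap_single_twoCells_right (hij : i ≠ j) (b : ℕ) (D : Finset (Fin d)) :
    moveMap j i b (Finsupp.single (twoCells i j D) 1) =
      ∑ R ∈ D.powersetCard b, Finsupp.single (twoCells i j (D \ R)) 1 := by
  simp only [moveMap_single, cell_twoCells_right hij, cmod_twoCells_left]

end MoveMaps

section TwoRows

variable {d : ℕ} {i j : Fin 2}

theorem twoCells_cell (hij : i ≠ j) (T : Fin d → Fin 2) : twoCells i j (cell T j) = T := by
  funext x
  simp only [twoCells, cell, Finset.mem_filter, Finset.mem_univ, true_and]
  split_ifs with h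
  · exact h.symm
  · omega

theorem swap_comp_eq_twoCells (hij : i ≠ j) (T : Fin d → Fin 2) :
    (![1, 0] : Fin 2 → Fin 2) ∘ T = twoCells i j (cell T j)ᶜ := by
  funext x
  simp only [Function.comp_apply, twoCells, cell, Finset.mem_compl, Finset.mem_filter,
    Finset.mem_univ, true_and]
  generalize T x = t
  fin_cases i <;> fin_cases j <;> fin_cases t <;> simp_all

end TwoRows

noncomputable def altMoveSum {d n : ℕ} (i j : Fin n) (p q : ℕ) : Amb d n →ₗ[ℂ] Amb d n :=
  ∑ a ∈ Finset.range (p + 1), ∑ b ∈ Finset.range (q + 1),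
    if a + q = b + p then (-1 : ℂ) ^ (p - a) • (moveMap j i b ∘ₗ moveMap i j a) else 0

theorem altMoveSum_apply {d n : ℕ} (i j : Fin n) (p q : ℕ) (v : Amb d n) :
    altMoveSum i j p q v =
      ∑ a ∈ Finset.range (p + 1), ∑ b ∈ Finset.range (q + 1),
        if a + q = b + p then (-1 : ℂ) ^ (p - a) • moveMap j i b (moveMap i j a v) else 0 := by
  simp only [altMoveSum, LinearMap.sum_apply]
  refine Finset.sum_congr rfl fun a _ => Finset.sum_congr rfl fun b _ => ?_
  split_ifs <;> rfl

theorem altMoveSum_single {d : ℕ} {i j : Fin 2} (hij : i ≠ j) {p q : ℕ} (T : Fin d → Fin 2)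
    (hp : #(cell T i) = p) (hq : #(cell T j) = q) :
    altMoveSum i j p q (Finsupp.single T 1) = Finsupp.single ((![1, 0] : Fin 2 → Fin 2) ∘ T) 1 := by
  obtain ⟨B, rfl⟩ : ∃ B, T = twoCells i j B := ⟨_, (twoCells_cell hij T).symm⟩
  rw [cell_twoCells_left hij] at hp
  rw [cell_twoCells_right hij] at hq
  rw [swap_comp_eq_twoCells hij, cell_twoCells_right hij, altMoveSum_apply]
  simp only [moveMap_single_twoCells_left hij, map_sum, moveMap_single_twoCells_right hij]
  exact Finset.sum_neg_one_pow_smul_sum_powersetCard_sdiff (R := ℂ) B hp hq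
    fun C => Finsupp.single (twoCells i j C) 1

theorem eqOn_Mmod_of_single {d n : ℕ} {lam : Fin n → ℕ} {M : Type*} [AddCommMonoid M]
    [Module ℂ M] {f g : Amb d n →ₗ[ℂ] M}
    (h : ∀ T, IsTabloid lam T → f (Finsupp.single T 1) = g (Finsupp.single T 1)) :
    Set.EqOn f g (Mmod d n lam) :=
  LinearMap.eqOn_span' (by rintro _ ⟨T, hT, rfl⟩; exact h T hT)

theorem Bmap_single (k l : ℕ) (T : Fin (k + l) → Fin 2) :
    Bmap k l (Finsupp.single T 1) = Finsupp.single ((![1, 0] : Fin 2 → Fin 2) ∘ T) 1 :=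
  Finsupp.mapDomain_single

theorem Bmap_eq_altMoveSum {k l : ℕ} {lam : Fin 2 → ℕ} {i j : Fin 2} (hij : i ≠ j)
    {v : Amb (k + l) 2} (hv : v ∈ Mmod (k + l) 2 lam) :
    Bmap k l v = altMoveSum i j (lam i) (lam j) v :=
  eqOn_Mmod_of_single (fun T hT => by
    rw [Bmap_single, altMoveSum_single hij T (hT i) (hT j)]) hv

theorem Bmap_ract (k l : ℕ) (g : Equiv.Perm (Fin (k + l))) (v : Amb (k + l) 2) :
    Bmap k l (ract (k + l) 2 g v) = ract (k + l) 2 g (Bmap k l v) := by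
  simp only [Bmap, ract, Finsupp.lmapDomain_apply, ← Finsupp.mapDomain_comp]
  rfl

/-- the braiding `B_{k,l}` equals
`Σ_{a,b ≥ 0, a−b = k−l} (−1)^{k−a} E_1^{(b)} ∘ F_1^{(a)}` and also
`Σ_{a,b ≥ 0, a−b = l−k} (−1)^{l−a} F_1^{(b)} ∘ E_1^{(a)}` as linear maps
`M^{(k,l)} → M^{(l,k)}` (terms with `a > k`, resp. `a > l`, vanish on `M^{(k,l)}`,
so the sums are truncated accordingly); moreover `B_{k,l}` is a homomorphism of right
`ℂ[S_{k+l}]`-modules. -/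
theorem stmt12 (k l : ℕ) :
    ∀ v ∈ Mmod (k + l) 2 ![k, l],
      (Bmap k l v =
        ∑ a ∈ Finset.range (k + 1), ∑ b ∈ Finset.range (l + 1),
          if a + l = b + k then
            ((-1 : ℂ)) ^ (k - a) •
              Emap (k + l) 2 0 (by norm_num) b (Fmap (k + l) 2 0 (by norm_num) a v)
          else 0) ∧
      (Bmap k l v =
        ∑ a ∈ Finset.range (l + 1), ∑ b ∈ Finset.range (k + 1),
          if a + k = b + l then
            ((-1 : ℂ)) ^ (l - a) •
              Fmap (k + l) 2 0 (by norm_num) b (Emap (k + l) 2 0 (by norm_num) a v)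
          else 0) ∧
      ∀ g : Equiv.Perm (Fin (k + l)),
        Bmap k l (ract (k + l) 2 g v) = ract (k + l) 2 g (Bmap k l v) := by
  intro v hv
  refine ⟨?_, ?_, fun g => Bmap_ract k l g v⟩
  · rw [Bmap_eq_altMoveSum (i := 0) (j := 1) (by decide) hv, altMoveSum_apply]
    simp only [Fmap_eq_moveMap, Emap_eq_moveMap]
    rfl
  · rw [Bmap_eq_altMoveSum (i := 1) (j := 0) (by decide) hv, altMoveSum_apply]
    simp only [Fmap_eq_moveMap, Emap_eq_moveMap]
    rfl
end

section
/- Let λ be a composition of d into m nonnegative parts and μ a composition of d into n nonnegative parts. For an A-tabloid S (a function {1,…,d} → {1,…,m}×{1,…,n}), a cell index (i,j) and a subset R ⊆ {1,…,d}, let c_{(i,j),R}S be the tabloid equal to (i,j) on R and equal to S elsewhere. For 1 ≤ i ≤ m and 1 ≤ j ≤ n−1, define ℂ-linear maps on the free ℂ-vector space on matrix tabloids by E_{ij}(S) = Σ_{k ∈ S⁻¹(i,j+1)} c_{(i,j),{k}}S and F_{ij}(S) = Σ_{k ∈ S⁻¹(i,j)} c_{(i,j+1),{k}}S. Let T be a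 λ-tabloid and T' a μ-tabloid, and write T⊗T' for the matrix tabloid x ↦ (T(x), T'(x)). Then for each 1 ≤ j ≤ n−1: Σ_{k ∈ T'^{j+1}} T ⊗ (c_{j,{k}}T') = Σ_{i=1}^{m} E_{ij}(T⊗T') and Σ_{k ∈ T'^{j}} T ⊗ (c_{j+1,{k}}T') = Σ_{i=1}^{m} F_{ij}(T⊗T'). -/
open Finsupp

/-- `c_{i,{k}} T`: move the element `k` into the `i`-th cell. -/
def cOne {d n : ℕ} (i : Fin n) (k : Fin d) (T : Fin d → Fin n) : Fin d → Fin n :=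
  fun x => if x = k then i else T x

/-- The ambient free ℂ-vector space on matrix tabloids (functions
`{1,…,d} → {1,…,m} × {1,…,n}`). -/
abbrev AmbP (d m n : ℕ) : Type := (Fin d → Fin m × Fin n) →₀ ℂ

/-- `c_{(i,j),{k}} S` for a matrix tabloid `S`: move `k` into the `(i,j)`-cell. -/
def cOneP {d m n : ℕ} (p : Fin m × Fin n) (k : Fin d) (S : Fin d → Fin m × Fin n) :
    Fin d → Fin m × Fin n :=
  fun x => if x = k then p else S x

/-- `E_{ij}(S) = Σ_{k ∈ S⁻¹(i,j+1)} c_{(i,j),{k}} S`, extended linearly. -/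
noncomputable def EmatP (d m n : ℕ) (i : Fin m) (j : ℕ) (hj : j + 1 < n) :
    AmbP d m n →ₗ[ℂ] AmbP d m n :=
  Finsupp.lift (AmbP d m n) ℂ (Fin d → Fin m × Fin n) fun S =>
    ∑ k ∈ Finset.univ.filter (fun x => S x = (i, ⟨j + 1, hj⟩)),
      Finsupp.single (cOneP (i, ⟨j, Nat.lt_of_succ_lt hj⟩) k S) 1

/-- `F_{ij}(S) = Σ_{k ∈ S⁻¹(i,j)} c_{(i,j+1),{k}} S`, extended linearly. -/
noncomputable def FmatP (d m n : ℕ) (i : Fin m) (j : ℕ) (hj : j + 1 < n) :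
    AmbP d m n →ₗ[ℂ] AmbP d m n :=
  Finsupp.lift (AmbP d m n) ℂ (Fin d → Fin m × Fin n) fun S =>
    ∑ k ∈ Finset.univ.filter (fun x => S x = (i, ⟨j, Nat.lt_of_succ_lt hj⟩)),
      Finsupp.single (cOneP (i, ⟨j + 1, hj⟩) k S) 1

section MatrixTabloid

variable {d m n : ℕ}

theorem EmatP_single (i : Fin m) (j : ℕ) (hj : j + 1 < n) (S : Fin d → Fin m × Fin n) :
    EmatP d m n i j hj (Finsupp.single S 1) =
      ∑ k ∈ Finset.univ.filter (fun x => S x = (i, ⟨j + 1, hj⟩)),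
        Finsupp.single (cOneP (i, ⟨j, Nat.lt_of_succ_lt hj⟩) k S) 1 := by
  simp [EmatP]

theorem FmatP_single (i : Fin m) (j : ℕ) (hj : j + 1 < n) (S : Fin d → Fin m × Fin n) :
    FmatP d m n i j hj (Finsupp.single S 1) =
      ∑ k ∈ Finset.univ.filter (fun x => S x = (i, ⟨j, Nat.lt_of_succ_lt hj⟩)),
        Finsupp.single (cOneP (i, ⟨j + 1, hj⟩) k S) 1 := by
  simp [FmatP]

theorem cOneP_prod_eq_prod_cOne (T : Fin d → Fin m) (T' : Fin d → Fin n) (a : Fin n)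
    {k : Fin d} :
    cOneP (T k, a) k (fun x => (T x, T' x)) = fun x => (T x, cOne a k T' x) := by
  funext x
  by_cases hx : x = k <;> simp [cOneP, cOne, hx]

/-- Grouping `T'^b` by the value of `T` splits it into the cells `(i, b)` of `T ⊗ T'`. -/
theorem sum_cell_single_prod_cOne (T : Fin d → Fin m) (T' : Fin d → Fin n) (a b : Fin n) :
    ∑ k ∈ cell T' b, Finsupp.single (fun x => (T x, cOne a k T' x)) (1 : ℂ) =
      ∑ i : Fin m, ∑ k ∈ Finset.univ.filter (fun x => (T x, T' x) = (i, b)),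
        Finsupp.single (cOneP (i, a) k (fun x => (T x, T' x))) 1 := by
  rw [← Finset.sum_fiberwise (cell T' b) T]
  refine Finset.sum_congr rfl fun i _ => ?_
  have hfiber : (cell T' b).filter (fun k => T k = i) =
      Finset.univ.filter (fun x => (T x, T' x) = (i, b)) := by
    ext k
    simp [cell, and_comm]
  rw [hfiber]
  refine Finset.sum_congr rfl fun k hk => ?_
  obtain ⟨rfl, -⟩ := Prod.mk.inj (Finset.mem_filter.mp hk).2
  rw [cOneP_prod_eq_prod_cOne]

end MatrixTabloid

theorem stmt15_general (d m n : ℕ) (T : Fin d → Fin m) (T' : Fin d → Fin n)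
    (j : ℕ) (hj : j + 1 < n) :
    (∑ k ∈ cell T' ⟨j + 1, hj⟩,
        Finsupp.single (fun x => (T x, cOne ⟨j, Nat.lt_of_succ_lt hj⟩ k T' x)) (1 : ℂ)) =
      ∑ i : Fin m, EmatP d m n i j hj (Finsupp.single (fun x => (T x, T' x)) 1) ∧
    (∑ k ∈ cell T' ⟨j, Nat.lt_of_succ_lt hj⟩,
        Finsupp.single (fun x => (T x, cOne ⟨j + 1, hj⟩ k T' x)) (1 : ℂ)) =
      ∑ i : Fin m, FmatP d m n i j hj (Finsupp.single (fun x => (T x, T' x)) 1) := by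
  simp only [EmatP_single, FmatP_single]
  exact ⟨sum_cell_single_prod_cOne T T' _ _, sum_cell_single_prod_cOne T T' _ _⟩

/-- for a `λ`-tabloid `T` and a `μ`-tabloid `T'`, writing `T⊗T'` for the
matrix tabloid `x ↦ (T x, T' x)`, we have for each `1 ≤ j ≤ n−1`:
`Σ_{k ∈ T'^{j+1}} T ⊗ (c_{j,{k}}T') = Σ_{i=1}^{m} E_{ij}(T⊗T')` and
`Σ_{k ∈ T'^{j}} T ⊗ (c_{j+1,{k}}T') = Σ_{i=1}^{m} F_{ij}(T⊗T')`. -/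
theorem stmt15 (d m n : ℕ) (lam : Fin m → ℕ) (mu : Fin n → ℕ)
    (hlam : ∑ i, lam i = d) (hmu : ∑ j, mu j = d)
    (T : Fin d → Fin m) (hT : IsTabloid lam T)
    (T' : Fin d → Fin n) (hT' : IsTabloid mu T')
    (j : ℕ) (hj : j + 1 < n) :
    (∑ k ∈ cell T' ⟨j + 1, hj⟩,
        Finsupp.single (fun x => (T x, cOne ⟨j, Nat.lt_of_succ_lt hj⟩ k T' x)) (1 : ℂ)) =
      ∑ i : Fin m, EmatP d m n i j hj (Finsupp.single (fun x => (T x, T' x)) 1) ∧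
    (∑ k ∈ cell T' ⟨j, Nat.lt_of_succ_lt hj⟩,
        Finsupp.single (fun x => (T x, cOne ⟨j + 1, hj⟩ k T' x)) (1 : ℂ)) =
      ∑ i : Fin m, FmatP d m n i j hj (Finsupp.single (fun x => (T x, T' x)) 1) :=
  stmt15_general d m n T T' j hj
end

section
/- Let λ = (λ_1,…,λ_n) and λ' = (λ'_1,…,λ'_{n'}) be compositions of d with all parts strictly positive. Then M^λ and M^{λ'} are isomorphic as right ℂ[S_d]-modules if and only if n = n' and λ' is a rearrangement of λ, i.e. λ'_i = λ_{σ(i)} for some permutation σ of {1,…,n}. -/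
/-! The character of `M^λ` at `g` is the number of `λ`-tabloids fixed by `g`, i.e. constant on
the cycles of `g`, so an equivariant isomorphism `M^λ ≅ M^{λ'}` gives equal fixed-point counts.
Take `g` whose cycles are the blocks of `λ`: it fixes the tabloid recording the blocks, hence also
some `λ'`-tabloid, and that tabloid assembles the parts of `λ` into those of `λ'` along a map
`f : Fin n → Fin n'`. As the parts of `λ'` are positive, `f` is onto; by symmetry `n = n'`, so
`f` is a bijection and `λ'` is a rearrangement of `λ`. Conversely, a rearrangement relabels
tabloids equivariantly. -/

open Finsupp

lemma cell_comp_map {d n : ℕ} (T : Fin d → Fin n) (g : Equiv.Perm (Fin d)) (i : Fin n) :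
    (cell (T ∘ ⇑g) i).map g.toEmbedding = cell T i := by
  ext y
  simp only [cell, Finset.mem_map, Finset.mem_filter, Finset.mem_univ, true_and,
    Function.comp_apply, Equiv.coe_toEmbedding]
  constructor
  · rintro ⟨x, hx, rfl⟩; exact hx
  · intro hy; exact ⟨g.symm y, by simpa using hy, by simp⟩

lemma IsTabloid.comp {d n : ℕ} {lam : Fin n → ℕ} {T : Fin d → Fin n}
    (hT : IsTabloid lam T) (g : Equiv.Perm (Fin d)) : IsTabloid lam (T ∘ ⇑g) := by
  intro i
  calc (cell (T ∘ ⇑g) i).card = ((cell (T ∘ ⇑g) i).map g.toEmbedding).card :=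
        (Finset.card_map _).symm
    _ = (cell T i).card := by rw [cell_comp_map]
    _ = lam i := hT i

/-- The type of `λ`-tabloids. -/
abbrev Tab (d n : ℕ) (lam : Fin n → ℕ) := {T : Fin d → Fin n // IsTabloid lam T}

/-- The right action of `g ∈ S_d` on the permutation module `M^λ`,
sending a tabloid `T` to `T ∘ g`. -/
noncomputable def ractT {d n : ℕ} (lam : Fin n → ℕ) (g : Equiv.Perm (Fin d)) :
    (Tab d n lam →₀ ℂ) →ₗ[ℂ] (Tab d n lam →₀ ℂ) :=
  Finsupp.lmapDomain ℂ ℂ fun T => ⟨T.1 ∘ ⇑g, T.2.comp g⟩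

lemma Finsupp.trace_lmapDomain {R α : Type*} [CommRing R] [Finite α] (f : α → α) :
    LinearMap.trace R (α →₀ R) (lmapDomain R R f) = Nat.card {a // f a = a} := by
  classical
  have := Fintype.ofFinite α
  rw [LinearMap.trace_eq_matrix_trace R Finsupp.basisSingleOne, Matrix.trace,
    Nat.card_eq_fintype_card, Fintype.card_subtype, Finset.card_filter]
  push_cast
  refine Finset.sum_congr rfl fun a _ => ?_
  simp [LinearMap.toMatrix_apply, Finsupp.single_apply]

lemma eq_of_comp_finRotate {m : ℕ} {β : Type*} {f : Fin m → β} (h : f ∘ finRotate m = f)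
    (i j : Fin m) : f i = f j := by
  obtain _ | m := m
  · exact i.elim0
  suffices ∀ i, f i = f 0 by rw [this i, this j]
  intro i
  induction i using Fin.induction with
  | zero => rfl
  | succ i ih =>
    rw [← ih, ← congrFun h i.castSucc, Function.comp_apply, finRotate_apply, Fin.coeSucc_eq_succ]

section Blocks

variable {d n : ℕ} {lam : Fin n → ℕ} (e : (Σ i, Fin (lam i)) ≃ Fin d)

def blockRotation : Equiv.Perm (Fin d) :=
  e.permCongr (Equiv.sigmaCongrRight fun i => finRotate (lam i))

lemma apply_eq_of_comp_blockRotation {β : Type*} {T : Fin d → β}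
    (hT : T ∘ blockRotation e = T) (i : Fin n) (x y : Fin (lam i)) :
    T (e ⟨i, x⟩) = T (e ⟨i, y⟩) := by
  refine eq_of_comp_finRotate (f := fun x => T (e ⟨i, x⟩)) (funext fun x => ?_) x y
  conv_rhs => rw [← hT]
  simp [blockRotation, Equiv.permCongr_apply]

lemma card_cell_eq_sum {m : ℕ} {T : Fin d → Fin m} (f : Fin n → Fin m)
    (hT : ∀ p, T (e p) = f p.1) (j : Fin m) :
    (cell T j).card = ∑ i ∈ Finset.univ.filter (f · = j), lam i := by
  have : cell T j =
      ((Finset.univ.filter (f · = j)).sigma fun _ => Finset.univ).map e.toEmbedding := by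
    ext x
    obtain ⟨p, rfl⟩ := e.surjective x
    simp [cell, hT]
  simp [this, Finset.card_sigma]

lemma isTabloid_blockTabloid : IsTabloid lam fun x => (e.symm x).1 := by
  intro i
  rw [card_cell_eq_sum e id (fun p => by simp)]
  simp [Finset.filter_eq']

lemma blockTabloid_comp_blockRotation :
    (fun x => (e.symm x).1) ∘ blockRotation e = fun x => (e.symm x).1 := by
  funext x
  simp [blockRotation, Equiv.permCongr_apply]

lemma exists_fiber_sum_of_comp_blockRotation (hpos : ∀ i, 0 < lam i) {m : ℕ}
    {lam' : Fin m → ℕ} {T : Fin d → Fin m} (hT : IsTabloid lam' T)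
    (hfix : T ∘ blockRotation e = T) :
    ∃ f : Fin n → Fin m, ∀ j, lam' j = ∑ i ∈ Finset.univ.filter (f · = j), lam i :=
  ⟨fun i => T (e ⟨i, ⟨0, hpos i⟩⟩), fun j => (hT j).symm.trans <|
    card_cell_eq_sum e _ (fun ⟨i, x⟩ => apply_eq_of_comp_blockRotation e hfix i x _) j⟩

end Blocks

lemma trace_ractT {d n : ℕ} (lam : Fin n → ℕ) (g : Equiv.Perm (Fin d)) :
    LinearMap.trace ℂ _ (ractT lam g) = Nat.card {T : Tab d n lam // T.1 ∘ g = T.1} := by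
  rw [ractT, Finsupp.trace_lmapDomain]
  simp only [Subtype.ext_iff]

lemma card_fixed_eq_of_equivariant {d n n' : ℕ} {lam : Fin n → ℕ} {lam' : Fin n' → ℕ}
    (Φ : (Tab d n lam →₀ ℂ) ≃ₗ[ℂ] (Tab d n' lam' →₀ ℂ))
    (hΦ : ∀ v g, Φ (ractT lam g v) = ractT lam' g (Φ v)) (g : Equiv.Perm (Fin d)) :
    Nat.card {T : Tab d n lam // T.1 ∘ g = T.1} =
      Nat.card {T : Tab d n' lam' // T.1 ∘ g = T.1} := by
  have hconj : Φ.conj (ractT lam g) = ractT lam' g := by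
    ext w
    simp [LinearEquiv.conj_apply, hΦ]
  have htrace := LinearMap.trace_conj' (ractT lam g) Φ
  rw [hconj, trace_ractT, trace_ractT] at htrace
  exact_mod_cast htrace.symm

lemma exists_fiber_sum_of_card_fixed_eq {d n n' : ℕ} {lam : Fin n → ℕ} {lam' : Fin n' → ℕ}
    (hlam : ∑ i, lam i = d) (hpos : ∀ i, 0 < lam i)
    (hcard : ∀ g : Equiv.Perm (Fin d), Nat.card {T : Tab d n lam // T.1 ∘ g = T.1} =
      Nat.card {T : Tab d n' lam' // T.1 ∘ g = T.1}) :
    ∃ f : Fin n → Fin n', ∀ j, lam' j = ∑ i ∈ Finset.univ.filter (f · = j), lam i := by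
  obtain ⟨e⟩ : Nonempty ((Σ i, Fin (lam i)) ≃ Fin d) :=
    ⟨Fintype.equivFinOfCardEq (by simp [hlam])⟩
  have : Nonempty {T : Tab d n lam // T.1 ∘ blockRotation e = T.1} :=
    ⟨⟨⟨_, isTabloid_blockTabloid e⟩, blockTabloid_comp_blockRotation e⟩⟩
  obtain ⟨⟨⟨T, hT⟩, hfix⟩⟩ :=
    (Nat.card_pos_iff.1 (hcard (blockRotation e) ▸ Nat.card_pos)).1
  exact exists_fiber_sum_of_comp_blockRotation e hpos hT hfix

lemma surjective_of_fiber_sum {ι κ : Type*} [DecidableEq κ] {w : ι → ℕ} {w' : κ → ℕ}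
    {s : Finset ι} (f : ι → κ) (hf : ∀ j, w' j = ∑ i ∈ s.filter (f · = j), w i)
    (hw' : ∀ j, 0 < w' j) : Function.Surjective f := fun j ↦
  have ⟨i, hi, _⟩ := Finset.exists_ne_zero_of_sum_ne_zero ((hf j).symm.trans_ne (hw' j).ne')
  ⟨i, (Finset.mem_filter.1 hi).2⟩

lemma exists_equiv_of_fiber_sums {ι κ : Type*} [Fintype ι] [Fintype κ] [DecidableEq ι]
    [DecidableEq κ] {w : ι → ℕ} {w' : κ → ℕ} (f : ι → κ) (f' : κ → ι)
    (hf : ∀ j, w' j = ∑ i ∈ Finset.univ.filter (f · = j), w i)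
    (hf' : ∀ i, w i = ∑ j ∈ Finset.univ.filter (f' · = i), w' j)
    (hw : ∀ i, 0 < w i) (hw' : ∀ j, 0 < w' j) :
    ∃ σ : κ ≃ ι, ∀ j, w' j = w (σ j) := by
  have hsurj := surjective_of_fiber_sum f hf hw'
  have hbij : Function.Bijective f := (Fintype.bijective_iff_surjective_and_card f).2
    ⟨hsurj, le_antisymm (Fintype.card_le_of_surjective f' (surjective_of_fiber_sum f' hf' hw))
      (Fintype.card_le_of_surjective f hsurj)⟩
  set τ := Equiv.ofBijective f hbij
  refine ⟨τ.symm, fun j => ?_⟩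
  have hfiber : Finset.univ.filter (f · = j) = {τ.symm j} := by
    ext i
    simp [τ.eq_symm_apply, τ]
  rw [hf j, hfiber, Finset.sum_singleton]

lemma cell_equiv_comp {d m n : ℕ} (τ : Fin m ≃ Fin n) (T : Fin d → Fin m) (j : Fin n) :
    cell (τ ∘ T) j = cell T (τ.symm j) := by
  ext x
  simp [cell, τ.eq_symm_apply]

def tabCongr {d n n' : ℕ} {lam : Fin n → ℕ} {lam' : Fin n' → ℕ} (σ : Fin n' ≃ Fin n)
    (hσ : ∀ i, lam' i = lam (σ i)) : Tab d n lam ≃ Tab d n' lam' where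
  toFun T := ⟨σ.symm ∘ T.1, fun j => by rw [cell_equiv_comp, σ.symm_symm, T.2, hσ]⟩
  invFun T := ⟨σ ∘ T.1, fun i => by rw [cell_equiv_comp, T.2, hσ, σ.apply_symm_apply]⟩
  left_inv T := Subtype.ext <| funext fun x => σ.apply_symm_apply _
  right_inv T := Subtype.ext <| funext fun x => σ.symm_apply_apply _

lemma exists_equivariant_equiv_of_rearrangement {d n n' : ℕ} {lam : Fin n → ℕ}
    {lam' : Fin n' → ℕ} (σ : Fin n' ≃ Fin n) (hσ : ∀ i, lam' i = lam (σ i)) :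
    ∃ Φ : (Tab d n lam →₀ ℂ) ≃ₗ[ℂ] (Tab d n' lam' →₀ ℂ),
      ∀ v g, Φ (ractT lam g v) = ractT lam' g (Φ v) := by
  refine ⟨Finsupp.domLCongr (tabCongr σ hσ), fun v g => ?_⟩
  simp only [ractT, domLCongr_apply, Finsupp.domCongr_apply, lmapDomain_apply,
    equivMapDomain_eq_mapDomain, ← mapDomain_comp]
  rfl

/-- for compositions `λ` of `d` into `n` strictly positive parts and `λ'`
of `d` into `n'` strictly positive parts, the permutation modules `M^λ` and `M^{λ'}` are
isomorphic as right `ℂ[S_d]`-modules if and only if `n = n'` and `λ'` is a rearrangement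
of `λ`. -/
theorem stmt18 (d n n' : ℕ) (lam : Fin n → ℕ) (lam' : Fin n' → ℕ)
    (hlam : ∑ i, lam i = d) (hlam' : ∑ i, lam' i = d)
    (hpos : ∀ i, 0 < lam i) (hpos' : ∀ i, 0 < lam' i) :
    (∃ Φ : (Tab d n lam →₀ ℂ) ≃ₗ[ℂ] (Tab d n' lam' →₀ ℂ),
      ∀ (v : Tab d n lam →₀ ℂ) (g : Equiv.Perm (Fin d)),
        Φ (ractT lam g v) = ractT lam' g (Φ v)) ↔
    ∃ σ : Fin n' ≃ Fin n, ∀ i, lam' i = lam (σ i) := by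
  constructor
  · rintro ⟨Φ, hΦ⟩
    have hcard := card_fixed_eq_of_equivariant Φ hΦ
    obtain ⟨f, hf⟩ := exists_fiber_sum_of_card_fixed_eq hlam hpos hcard
    obtain ⟨f', hf'⟩ := exists_fiber_sum_of_card_fixed_eq hlam' hpos' fun g => (hcard g).symm
    exact exists_equiv_of_fiber_sums f f' hf hf' hpos hpos'
  · rintro ⟨σ, hσ⟩
    exact exists_equivariant_equiv_of_rearrangement σ hσ
end
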